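/- arXiv:1007.1292 — 6 statements merged into one kernel-verified Lean document; each statement's English description precedes it below -/
import Mathlib

section
/- Let M be a finite graph with vertex set V and edge set E, let α : V → ℕ and β : E → ℕ. Then M admits an assignment of a nonnegative integer weight to each half-edge such that each edge e has total weight β(e) and each vertex v has total ingoing weight α(v) (an α/β-orientation) if and only if (i) ∑_{v∈V} α(v) = ∑_{e∈E} β(e), and (ii) for every subset S of vertices, ∑_{v∈S} α(v) ≥ ∑_{e∈E_S} β(e), where E_S is the set of edges with both endpoints in S. -/
/-!
Cut each edge `e` into `β e` unit tokens and each vertex `v` into `α v` slots, a token of `e`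
being allowed to take a slot of either endpoint of `e`. A set of tokens touching the vertex set
`S` comes from edges of `E_S`, so (ii) is Hall's condition and Hall's marriage theorem yields an
injection of tokens into slots; by (i) it is a bijection. Orienting each token towards the
endpoint whose slot it takes, and counting tokens at each half-edge, gives the orientation.
-/

open Finset

lemma card_filter_eq_of_two_values {V ι : Type*} [DecidableEq V] (s : Finset ι) (h : ι → V)
    {a b : V} (hab : ∀ i ∈ s, h i = a ∨ h i = b) (v : V) :
    #{i ∈ s | h i = v} =
      (if a = v then #{i ∈ s | h i = a} else 0) + (if b = v then #{i ∈ s | h i ≠ a} else 0) := by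
  split_ifs with ha hb hb
  · subst ha hb
    rw [left_eq_add, card_eq_zero, filter_eq_empty_iff]
    exact fun i hi => not_not.2 ((hab i hi).elim id id)
  · rw [ha, add_zero]
  · rw [zero_add]
    exact congrArg card (filter_congr fun i hi => by grind)
  · rw [add_zero, card_eq_zero, filter_eq_empty_iff]
    exact fun i hi => by grind

section Biorientation

variable {V E : Type*} [DecidableEq V] [Fintype E] (ends : E → V × V)

def inWeight (w : E → ℕ × ℕ) (v : V) : ℕ :=
  ∑ e, ((if (ends e).1 = v then (w e).1 else 0) + (if (ends e).2 = v then (w e).2 else 0))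

def inducedEdges (S : Finset V) : Finset E :=
  univ.filter fun e => (ends e).1 ∈ S ∧ (ends e).2 ∈ S

lemma sum_inWeight (w : E → ℕ × ℕ) (S : Finset V) :
    ∑ v ∈ S, inWeight ends w v =
      ∑ e, ((if (ends e).1 ∈ S then (w e).1 else 0) +
        (if (ends e).2 ∈ S then (w e).2 else 0)) := by
  simp only [inWeight]
  rw [sum_comm]
  exact sum_congr rfl fun e _ => by rw [sum_add_distrib, sum_ite_eq, sum_ite_eq]

lemma sum_inWeight_univ [Fintype V] (w : E → ℕ × ℕ) :
    ∑ v, inWeight ends w v = ∑ e, ((w e).1 + (w e).2) := by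
  simp [sum_inWeight]

lemma sum_inducedEdges_le_sum_inWeight (w : E → ℕ × ℕ) (S : Finset V) :
    ∑ e ∈ inducedEdges ends S, ((w e).1 + (w e).2) ≤ ∑ v ∈ S, inWeight ends w v := by
  rw [sum_inWeight]
  calc ∑ e ∈ inducedEdges ends S, ((w e).1 + (w e).2)
      = ∑ e ∈ inducedEdges ends S, ((if (ends e).1 ∈ S then (w e).1 else 0) +
          (if (ends e).2 ∈ S then (w e).2 else 0)) :=
        sum_congr rfl fun e he => by
          obtain ⟨h₁, h₂⟩ := (mem_filter.1 he).2
          rw [if_pos h₁, if_pos h₂]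
    _ ≤ _ := sum_le_sum_of_subset (filter_subset _ _)

lemma exists_inWeight_eq_card_heads (β : E → ℕ) (head : (Σ e, Fin (β e)) → V)
    (h_head : ∀ x, head x = (ends x.1).1 ∨ head x = (ends x.1).2) :
    ∃ w : E → ℕ × ℕ, (∀ e, (w e).1 + (w e).2 = β e) ∧
      ∀ v, inWeight ends w v = #{x | head x = v} := by
  refine ⟨fun e => (#{i | head ⟨e, i⟩ = (ends e).1}, #{i | head ⟨e, i⟩ ≠ (ends e).1}), fun e => ?_,
    fun v => ?_⟩
  · simp only [card_filter_add_card_filter_not, card_univ, Fintype.card_fin]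
  · rw [inWeight, card_filter, Fintype.sum_sigma]
    refine sum_congr rfl fun e _ => ?_
    rw [← card_filter]
    dsimp only
    exact (card_filter_eq_of_two_values (a := (ends e).1) (b := (ends e).2) _ _
      (fun i _ => h_head ⟨e, i⟩) v).symm

lemma exists_injective_tokens_to_endpoint_slots [Fintype V] (α : V → ℕ) (β : E → ℕ)
    (h : ∀ S, ∑ e ∈ inducedEdges ends S, β e ≤ ∑ v ∈ S, α v) :
    ∃ f : (Σ e, Fin (β e)) → Σ v, Fin (α v), Function.Injective f ∧
      ∀ x, (f x).1 = (ends x.1).1 ∨ (f x).1 = (ends x.1).2 := by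
  let endpoints : E → Finset V := fun e => {(ends e).1, (ends e).2}
  obtain ⟨f, hf, hf_mem⟩ := (all_card_le_biUnion_card_iff_exists_injective
    fun x : Σ e, Fin (β e) => (endpoints x.1).sigma fun v => (univ : Finset (Fin (α v)))).1 <| by
    intro s
    let S := s.biUnion fun x => endpoints x.1
    have hs : s ⊆ (inducedEdges ends S).sigma fun e => univ := fun x hx => by
      simp only [mem_sigma, mem_univ, and_true, inducedEdges, mem_filter, true_and, S, mem_biUnion]
      exact ⟨⟨x, hx, by simp [endpoints]⟩, ⟨x, hx, by simp [endpoints]⟩⟩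
    have hS : (s.biUnion fun x => (endpoints x.1).sigma fun v => (univ : Finset (Fin (α v)))) =
        S.sigma fun v => univ := by
      ext ⟨v, i⟩; simp [S]
    calc #s ≤ #((inducedEdges ends S).sigma fun e => univ) := card_le_card hs
      _ = ∑ e ∈ inducedEdges ends S, β e := by simp [card_sigma]
      _ ≤ ∑ v ∈ S, α v := h S
      _ = _ := by simp [hS, card_sigma]
  exact ⟨f, hf, fun x => by simpa [endpoints] using hf_mem x⟩

lemma card_filter_sigma_fst_eq [Fintype V] (α : V → ℕ) (v : V) :
    #{y : Σ v, Fin (α v) | y.1 = v} = α v := by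
  have : ({y : Σ v, Fin (α v) | y.1 = v} : Finset _) = ({v} : Finset V).sigma fun _ => univ := by
    ext ⟨u, i⟩
    simp
  simp [this, card_sigma]

theorem exists_orientation_of_hall [Fintype V] (α : V → ℕ) (β : E → ℕ)
    (hsum : ∑ v, α v = ∑ e, β e) (h : ∀ S, ∑ e ∈ inducedEdges ends S, β e ≤ ∑ v ∈ S, α v) :
    ∃ w : E → ℕ × ℕ, (∀ e, (w e).1 + (w e).2 = β e) ∧ ∀ v, inWeight ends w v = α v := by
  obtain ⟨f, hf_inj, hf_ends⟩ := exists_injective_tokens_to_endpoint_slots ends α β h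
  have hf : Function.Bijective f :=
    (Fintype.bijective_iff_injective_and_card f).2 ⟨hf_inj, by simp [hsum]⟩
  obtain ⟨w, hwβ, hwα⟩ := exists_inWeight_eq_card_heads ends β (fun x => (f x).1) hf_ends
  refine ⟨w, hwβ, fun v => ?_⟩
  rw [hwα, ← card_filter_sigma_fst_eq α v]
  exact card_equiv (Equiv.ofBijective f hf) (by simp)

end Biorientation

/-- A finite graph (vertex set `V`, edge set `E`, each edge `e` with
endpoints `(ends e).1, (ends e).2`) admits an `α/β`-orientation — an assignment
`w : E → ℕ × ℕ` of nonnegative integer weights to the two half-edges of each edge such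
that each edge `e` has total weight `β e` and each vertex `v` has total ingoing weight
`α v` — if and only if (i) `∑ α = ∑ β` and (ii) for every subset `S` of vertices,
`∑_{v ∈ S} α v ≥ ∑_{e ∈ E_S} β e`, where `E_S` is the set of edges with both endpoints
in `S`. -/
theorem stmt1 (V E : Type) [Fintype V] [Fintype E] [DecidableEq V]
    (ends : E → V × V) (α : V → ℕ) (β : E → ℕ) :
    (∃ w : E → ℕ × ℕ, (∀ e, (w e).1 + (w e).2 = β e) ∧
        ∀ v : V, (∑ e : E, ((if (ends e).1 = v then (w e).1 else 0) +
          (if (ends e).2 = v then (w e).2 else 0))) = α v) ↔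
      ((∑ v : V, α v = ∑ e : E, β e) ∧
        ∀ S : Finset V,
          ∑ e ∈ univ.filter (fun e => (ends e).1 ∈ S ∧ (ends e).2 ∈ S), β e ≤
            ∑ v ∈ S, α v) := by
  constructor
  · rintro ⟨w, hwβ, hwα⟩
    have hwα : ∀ v, inWeight ends w v = α v := hwα
    refine ⟨?_, fun S => ?_⟩
    · simp only [← hwα, ← hwβ, sum_inWeight_univ]
    · simpa only [← hwα, ← hwβ, inducedEdges] using sum_inducedEdges_le_sum_inWeight ends w S
  · rintro ⟨hsum, hS⟩
    exact exists_orientation_of_hall ends α β hsum hS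
end

section
/- In any d-branching mobile (d ≥ 3), the excess, defined as the number of edges plus the number of white-white edges minus the number of buds, equals -d. -/
open Finset

/-- A combinatorial model of a weighted mobile: a finite plane tree with vertices colored
black (`black v = true`) or white, a number `buds v` of dangling buds at each (black)
vertex, and an ℕ-weight on each of the two half-edges of each edge.  The ℕ-mobile
conditions require weights to be positive at white endpoints and zero at black
endpoints. -/
structure Mobile where
  V : Type
  E : Type
  [fintypeV : Fintype V]
  [fintypeE : Fintype E]
  [decV : DecidableEq V]
  [decE : DecidableEq E]
  ends : E → V × V
  black : V → Bool
  buds : V → ℕ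
  w : E → ℕ × ℕ
  connected : ∀ x y : V,
    Relation.ReflTransGen (fun a b => ∃ e, ends e = (a, b) ∨ ends e = (b, a)) x y
  treeCard : Fintype.card V = Fintype.card E + 1
  budsOnlyBlack : ∀ v, black v = false → buds v = 0
  posWhite : ∀ e, (black (ends e).1 = false → 0 < (w e).1) ∧
    (black (ends e).2 = false → 0 < (w e).2)
  zeroBlack : ∀ e, (black (ends e).1 = true → (w e).1 = 0) ∧
    (black (ends e).2 = true → (w e).2 = 0)

attribute [instance] Mobile.fintypeV Mobile.fintypeE Mobile.decV Mobile.decE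

/-- Degree of a vertex, counting buds. -/
def Mobile.degree (M : Mobile) (v : M.V) : ℕ :=
  M.buds v + ∑ e : M.E, ((if (M.ends e).1 = v then 1 else 0) +
    (if (M.ends e).2 = v then 1 else 0))

/-- Weight of a vertex: sum of the weights of its incident (non-bud) half-edges. -/
def Mobile.vertexWeight (M : Mobile) (v : M.V) : ℕ :=
  ∑ e : M.E, ((if (M.ends e).1 = v then (M.w e).1 else 0) +
    (if (M.ends e).2 = v then (M.w e).2 else 0))

/-- Weight of an edge: sum of the weights of its two half-edges. -/
def Mobile.edgeWeight (M : Mobile) (e : M.E) : ℕ := (M.w e).1 + (M.w e).2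

/-- Number of edges. -/
def Mobile.numEdges (M : Mobile) : ℕ := Fintype.card M.E

/-- Number of white-white edges. -/
def Mobile.numWW (M : Mobile) : ℕ :=
  (univ.filter (fun e : M.E =>
    M.black (M.ends e).1 = false ∧ M.black (M.ends e).2 = false)).card

/-- Total number of buds. -/
def Mobile.numBuds (M : Mobile) : ℕ := ∑ v : M.V, M.buds v

/-- Number of black vertices. -/
def Mobile.numBlack (M : Mobile) : ℕ := (univ.filter (fun v : M.V => M.black v = true)).card

/-- Number of white vertices. -/
def Mobile.numWhite (M : Mobile) : ℕ := (univ.filter (fun v : M.V => M.black v = false)).card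

/-- The excess of a mobile: number of edges plus number of white-white edges minus the
number of buds. -/
def Mobile.excess (M : Mobile) : ℤ :=
  (M.numEdges : ℤ) + (M.numWW : ℤ) - (M.numBuds : ℤ)

/-- A `d`-branching mobile: every black vertex has degree `d`, every white vertex has
weight `d`, and every edge has weight `d - 2`. -/
def Mobile.IsDBranching (M : Mobile) (d : ℕ) : Prop :=
  (∀ v, M.black v = true → M.degree v = d) ∧
  (∀ v, M.black v = false → M.vertexWeight v = d) ∧
  (∀ e, M.edgeWeight e = d - 2)

/-!
Double counting. Edges have weight `d - 2 > 0` while black half-edges have weight `0`, so no edge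
joins two black vertices; hence each edge carries at most one black half-edge, and the white-white
edges are exactly those carrying none. Counting black half-edges through black degrees gives
`#buds + #(black half-edges) = d·#black`, and counting weights gives `d·#white = (d - 2)·#edges`.
Together with `#black + #white = #edges + 1` these identities force `excess = -d`.
-/

namespace Mobile

variable (M : Mobile)

def numBlackHalfEdges : ℕ :=
  ∑ e : M.E, ((if M.black (M.ends e).1 then 1 else 0) + (if M.black (M.ends e).2 then 1 else 0))

theorem sum_incidence (S : Finset M.V) (a b : M.E → ℕ) :
    ∑ v ∈ S, ∑ e : M.E, ((if (M.ends e).1 = v then a e else 0) +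
      (if (M.ends e).2 = v then b e else 0)) =
    ∑ e : M.E, ((if (M.ends e).1 ∈ S then a e else 0) +
      (if (M.ends e).2 ∈ S then b e else 0)) := by
  rw [sum_comm]
  refine sum_congr rfl fun e _ => ?_
  rw [sum_add_distrib, sum_ite_eq, sum_ite_eq]

theorem sum_degree_black :
    ∑ v ∈ univ.filter (M.black · = true), M.degree v = M.numBuds + M.numBlackHalfEdges := by
  have buds_black : ∑ v ∈ univ.filter (M.black · = true), M.buds v = M.numBuds :=
    sum_filter_of_ne fun v _ hv => by
      by_contra hb
      exact hv (M.budsOnlyBlack v (by simpa using hb))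
  simp only [degree]
  rw [sum_add_distrib, buds_black, sum_incidence]
  simp only [mem_filter, mem_univ, true_and]
  rfl

theorem vertexWeight_eq_zero_of_black {v : M.V} (hv : M.black v = true) :
    M.vertexWeight v = 0 :=
  sum_eq_zero fun e _ => by
    have := M.zeroBlack e
    split_ifs <;> simp_all

theorem sum_vertexWeight : ∑ v, M.vertexWeight v = ∑ e, M.edgeWeight e := by
  simp only [vertexWeight, sum_incidence, mem_univ, if_true]
  rfl

theorem sum_vertexWeight_white :
    ∑ v ∈ univ.filter (M.black · = false), M.vertexWeight v = ∑ e, M.edgeWeight e := by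
  rw [← sum_vertexWeight]
  refine sum_filter_of_ne fun v _ hv => ?_
  by_contra hw
  exact hv (M.vertexWeight_eq_zero_of_black (by simpa using hw))

theorem numBlack_add_numWhite : M.numBlack + M.numWhite = M.numEdges + 1 := by
  rw [numBlack, numWhite, numEdges, ← M.treeCard, ← card_univ]
  simpa using card_filter_add_card_filter_not (s := univ) (M.black · = true)

theorem numWW_add_numBlackHalfEdges
    (hBB : ∀ e, M.black (M.ends e).1 = false ∨ M.black (M.ends e).2 = false) :
    M.numWW + M.numBlackHalfEdges = M.numEdges := by
  rw [numWW, card_filter, numBlackHalfEdges, ← sum_add_distrib, numEdges, ← card_univ,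
    card_eq_sum_ones]
  refine sum_congr rfl fun e _ => ?_
  have := hBB e
  cases hb₁ : M.black (M.ends e).1 <;> cases hb₂ : M.black (M.ends e).2 <;> simp_all

namespace IsDBranching

variable {M} {d : ℕ}

theorem black_fst_eq_false_or_black_snd_eq_false (h : M.IsDBranching d) (hd : 3 ≤ d)
    (e : M.E) :
    M.black (M.ends e).1 = false ∨ M.black (M.ends e).2 = false := by
  by_contra! hBB
  simp only [ne_eq, Bool.not_eq_false] at hBB
  have hw := h.2.2 e
  rw [edgeWeight, (M.zeroBlack e).1 hBB.1, (M.zeroBlack e).2 hBB.2] at hw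
  omega

theorem mul_numBlack (h : M.IsDBranching d) :
    d * M.numBlack = M.numBuds + M.numBlackHalfEdges := by
  rw [← sum_degree_black, sum_congr rfl fun v hv => h.1 v (mem_filter.mp hv).2, sum_const,
    smul_eq_mul, numBlack, mul_comm]

theorem mul_numWhite (h : M.IsDBranching d) : d * M.numWhite = M.numEdges * (d - 2) := by
  rw [numWhite, mul_comm, ← smul_eq_mul, ← sum_const, numEdges, ← card_univ, ← smul_eq_mul,
    ← sum_const, ← sum_congr rfl fun v hv => h.2.1 v (mem_filter.mp hv).2,
    sum_vertexWeight_white, sum_congr rfl fun e _ => h.2.2 e]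

end IsDBranching

end Mobile

/-- In any `d`-branching mobile (`d ≥ 3`), the excess equals `-d`. -/
theorem stmt5 (M : Mobile) (d : ℕ) (hd : 3 ≤ d) (h : M.IsDBranching d) :
    M.excess = -(d : ℤ) := by
  have hWW := M.numWW_add_numBlackHalfEdges (h.black_fst_eq_false_or_black_snd_eq_false hd)
  have hBlack := h.mul_numBlack
  have hWhite := h.mul_numWhite
  have hTree := M.numBlack_add_numWhite
  zify [(by omega : 2 ≤ d)] at hWW hBlack hWhite hTree
  rw [Mobile.excess]
  linear_combination hWW + hBlack + hWhite - (d : ℤ) * hTree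
end

section
/- If d = 2b is even, then in any d-branching mobile every half-edge has an even weight (lying in {0, 2, ..., d-2}). -/
open Finset

/-!
Reduce the half-edge weights mod 2. Every edge has even weight, so both half-edges of an edge
have the same parity `x e`, and at each vertex `v` the parity of the weight of `v` is the
`v`-entry of `∂ x`, where `∂` is the unoriented incidence matrix over `𝔽₂`; vertex weights are
`0` or `d`, so `∂ x = 0`. In a connected graph the range of `∂` contains every `δ_a + δ_b`, so it
has codimension at most one, and since a tree has `|V| = |E| + 1`, rank–nullity makes `∂`
injective. Hence `x = 0`. (This is the linear-algebra form of the fact that a nonempty forest of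
odd edges would have a vertex meeting exactly one of them.)
-/

open Matrix

variable {V E : Type*}

def EdgeAdj (ends : E → V × V) (a b : V) : Prop := ∃ e, ends e = (a, b) ∨ ends e = (b, a)

variable [DecidableEq V]

def incidenceMatrix (ends : E → V × V) : Matrix V E (ZMod 2) :=
  Matrix.of fun v e => (if (ends e).1 = v then 1 else 0) + (if (ends e).2 = v then 1 else 0)

variable [Fintype E]

lemma incidenceMatrix_mulVec_single [DecidableEq E] (ends : E → V × V) (e : E) :
    incidenceMatrix ends *ᵥ Pi.single e 1 = Pi.single (ends e).1 1 + Pi.single (ends e).2 1 := by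
  ext v
  simp [incidenceMatrix, Matrix.mulVec_single, Pi.single_apply, eq_comm]

lemma single_add_single_mem_range_incidenceMatrix {ends : E → V × V} {x y : V}
    (hxy : Relation.ReflTransGen (EdgeAdj ends) x y) :
    Pi.single x 1 + Pi.single y 1 ∈ LinearMap.range (incidenceMatrix ends).mulVecLin := by
  induction hxy with
  | refl => convert Submodule.zero_mem _; ext; exact CharTwo.add_self_eq_zero _
  | @tail a b _ hab ih =>
    classical
    obtain ⟨e, he | he⟩ := hab
    all_goals
      have hedge : incidenceMatrix ends *ᵥ Pi.single e 1 ∈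
          LinearMap.range (incidenceMatrix ends).mulVecLin := ⟨_, rfl⟩
      rw [incidenceMatrix_mulVec_single, he] at hedge
      convert add_mem ih hedge using 1
      ext
      simp only [Pi.add_apply]
      grind

lemma card_le_finrank_range_incidenceMatrix_add_one [Fintype V] {ends : E → V × V}
    (hconn : ∀ x y : V, Relation.ReflTransGen (EdgeAdj ends) x y) :
    Fintype.card V ≤
      Module.finrank (ZMod 2) (LinearMap.range (incidenceMatrix ends).mulVecLin) + 1 := by
  cases isEmpty_or_nonempty V with
  | inl _ => simp
  | inr hV =>
    obtain ⟨v₀⟩ := hV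
    have htop : LinearMap.range (incidenceMatrix ends).mulVecLin ⊔
        Submodule.span (ZMod 2) {Pi.single v₀ 1} = ⊤ := by
      rw [eq_top_iff, ← (Pi.basisFun (ZMod 2) V).span_eq, Submodule.span_le]
      rintro _ ⟨y, rfl⟩
      have hy : (Pi.single y 1 : V → ZMod 2) =
          (Pi.single y 1 + Pi.single v₀ 1) + Pi.single v₀ 1 := by
        ext
        simp only [Pi.add_apply]
        grind
      rw [Pi.basisFun_apply, hy]
      exact Submodule.add_mem_sup (single_add_single_mem_range_incidenceMatrix (hconn y v₀))
        (Submodule.mem_span_singleton_self _)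
    calc Fintype.card V = Module.finrank (ZMod 2) (⊤ : Submodule (ZMod 2) (V → ZMod 2)) := by
          simp
      _ ≤ _ := htop ▸ Submodule.finrank_add_le_finrank_add_finrank _ _
      _ ≤ _ := by gcongr; simpa using finrank_span_le_card ({Pi.single v₀ 1} : Set (V → ZMod 2))

lemma incidenceMatrix_mulVec_injective [Fintype V] {ends : E → V × V}
    (hconn : ∀ x y : V, Relation.ReflTransGen (EdgeAdj ends) x y)
    (hcard : Fintype.card V = Fintype.card E + 1) :
    Function.Injective (incidenceMatrix ends).mulVec := by
  have hrank := LinearMap.finrank_range_add_finrank_ker (incidenceMatrix ends).mulVecLin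
  have hle := card_le_finrank_range_incidenceMatrix_add_one hconn
  rw [Module.finrank_fintype_fun_eq_card] at hrank
  have hker : LinearMap.ker (incidenceMatrix ends).mulVecLin = ⊥ :=
    Submodule.finrank_eq_zero.mp (by omega)
  exact LinearMap.ker_eq_bot.mp hker

namespace Mobile

variable (M : Mobile)

lemma incidenceMatrix_mulVec_fst_w_apply (hedge : ∀ e, Even (M.edgeWeight e)) (v : M.V) :
    (incidenceMatrix M.ends *ᵥ fun e => ((M.w e).1 : ZMod 2)) v = M.vertexWeight v := by
  simp only [mulVec, dotProduct, incidenceMatrix, Matrix.of_apply, vertexWeight]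
  push_cast
  refine Finset.sum_congr rfl fun e _ => ?_
  have hsame : ((M.w e).2 : ZMod 2) = (M.w e).1 := by
    have := ZMod.natCast_eq_zero_iff_even.mpr (hedge e)
    rw [edgeWeight, Nat.cast_add] at this
    exact (CharTwo.add_eq_zero.mp this).symm
  rw [hsame]
  split_ifs <;> ring

lemma even_vertexWeight {d : ℕ} (h : M.IsDBranching d) (hd : Even d) (v : M.V) :
    Even (M.vertexWeight v) := by
  cases hv : M.black v with
  | false => exact h.2.1 v hv ▸ hd
  | true =>
    suffices M.vertexWeight v = 0 from this ▸ Even.zero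
    refine Finset.sum_eq_zero fun e _ => ?_
    have h₁ := fun hv₁ : (M.ends e).1 = v => (M.zeroBlack e).1 (hv₁ ▸ hv)
    have h₂ := fun hv₂ : (M.ends e).2 = v => (M.zeroBlack e).2 (hv₂ ▸ hv)
    split_ifs <;> simp_all

theorem even_halfEdgeWeights (hedge : ∀ e, Even (M.edgeWeight e))
    (hvertex : ∀ v, Even (M.vertexWeight v)) (e : M.E) :
    Even (M.w e).1 ∧ Even (M.w e).2 := by
  have hzero : (incidenceMatrix M.ends *ᵥ fun e => ((M.w e).1 : ZMod 2)) =
      incidenceMatrix M.ends *ᵥ 0 := by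
    ext v
    rw [incidenceMatrix_mulVec_fst_w_apply M hedge, mulVec_zero,
      ZMod.natCast_eq_zero_iff_even.mpr (hvertex v), Pi.zero_apply]
  have h₁ : Even (M.w e).1 := ZMod.natCast_eq_zero_iff_even.mp
    (congrFun (incidenceMatrix_mulVec_injective M.connected M.treeCard hzero) e)
  exact ⟨h₁, (Nat.even_add.mp (hedge e)).mp h₁⟩

end Mobile

theorem stmt6_general (M : Mobile) (d b : ℕ) (hb : d = 2 * b)
    (h : M.IsDBranching d) :
    ∀ e : M.E, (Even (M.w e).1 ∧ (M.w e).1 ≤ d - 2) ∧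
      (Even (M.w e).2 ∧ (M.w e).2 ≤ d - 2) := by
  have hd : Even d := hb ▸ even_two_mul b
  have hedge (e : M.E) : Even (M.edgeWeight e) := h.2.2 e ▸ hd.tsub even_two
  intro e
  obtain ⟨h₁, h₂⟩ := M.even_halfEdgeWeights hedge (M.even_vertexWeight h hd) e
  have hsum : (M.w e).1 + (M.w e).2 = d - 2 := h.2.2 e
  exact ⟨⟨h₁, by omega⟩, ⟨h₂, by omega⟩⟩

/-- If `d = 2b` is even, then in any `d`-branching mobile every
half-edge has an even weight lying in `{0, 2, ..., d-2}`. -/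
theorem stmt6 (M : Mobile) (d b : ℕ) (hd : 3 ≤ d) (hb : d = 2 * b)
    (h : M.IsDBranching d) :
    ∀ e : M.E, (Even (M.w e).1 ∧ (M.w e).1 ≤ d - 2) ∧
      (Even (M.w e).2 ∧ (M.w e).2 ≤ d - 2) :=
  stmt6_general M d b hb h
end

section
/- Let u(x) be the unique formal power series with u = 1 + x·u^4. Then for p ≥ 3, the coefficients of T_p(x) = C(2p-4, p-3)·u^{2p-3} are given by [x^n] T_p(x) = (2n+p-2)·t_{p,n}, where t_{p,n} = (2(2p-3)!/((p-1)!(p-3)!)) · ((4n+2p-5)!/(n!(3n+2p-3)!)). -/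
/-! The map `f ↦ 1 + X f⁴` raises the `X`-adic order of differences by one, so its iterates
from `0` converge coefficientwise to a fixed point, and any two fixed points agree to every
order. Instead of Lagrange inversion, the coefficients of `u^m` are pinned down by
`u^(m+1) = u^m + X u^(m+4)` and `[x⁰] u^m = 1`, a recurrence that the Fuss–Catalan numbers
`C(4n+m-1, n) - 3 C(4n+m-1, n-1)` also satisfy by Pascal's rule; the formula for `T_p` is
then factorial algebra. -/

open PowerSeries Nat

/-- `t_{p,n} = (2(2p-3)!/((p-1)!(p-3)!)) · ((4n+2p-5)!/(n!(3n+2p-3)!))`. -/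
noncomputable def tpn (p n : ℕ) : ℚ :=
  (2 * (2 * p - 3)! : ℚ) / ((p - 1)! * (p - 3)! : ℚ) *
    ((4 * n + 2 * p - 5)! / ((n ! : ℚ) * ((3 * n + 2 * p - 3)! : ℚ)))

namespace PowerSeries

variable {R : Type*} [CommRing R]

theorem eq_zero_of_forall_X_pow_dvd {f : R⟦X⟧} (h : ∀ k, X ^ k ∣ f) : f = 0 := by
  ext n
  exact X_pow_dvd_iff.mp (h (n + 1)) n n.lt_succ_self

section Contraction

variable {T : R⟦X⟧ → R⟦X⟧} (hT : ∀ k f g, X ^ k ∣ f - g → X ^ (k + 1) ∣ T f - T g)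
include hT

theorem X_pow_dvd_iterate_sub_iterate (k j : ℕ) : X ^ k ∣ T^[k + j] 0 - T^[k] 0 := by
  induction k generalizing j with
  | zero => simp
  | succ k ih =>
    rw [Nat.add_right_comm, Function.iterate_succ_apply', Function.iterate_succ_apply']
    exact hT _ _ _ (ih j)

theorem X_pow_dvd_sub_iterate_of_fixed {u : R⟦X⟧} (hu : u = T u) (k : ℕ) :
    X ^ k ∣ u - T^[k] 0 := by
  induction k with
  | zero => simp
  | succ k ih =>
    rw [Function.iterate_succ_apply', hu]
    exact hT _ _ _ ih

theorem existsUnique_eq_of_X_pow_dvd_sub : ∃! u : R⟦X⟧, u = T u := by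
  set u := mk fun n => coeff n (T^[n + 1] 0)
  have hu (k : ℕ) : X ^ k ∣ u - T^[k] 0 := by
    refine X_pow_dvd_iff.mpr fun m hm => ?_
    have hstable := X_pow_dvd_iff.mp
      (X_pow_dvd_iterate_sub_iterate hT (m + 1) (k - (m + 1))) m m.lt_succ_self
    rw [Nat.add_sub_cancel' hm, map_sub, sub_eq_zero] at hstable
    rw [map_sub, coeff_mk, hstable, sub_self]
  refine ⟨u, ?_, fun v hv => ?_⟩
  · refine sub_eq_zero.mp (eq_zero_of_forall_X_pow_dvd fun k => ?_)
    have h := dvd_sub (hu (k + 1)) (hT _ _ _ (hu k))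
    rw [Function.iterate_succ_apply', sub_sub_sub_cancel_right] at h
    exact (pow_dvd_pow X k.le_succ).trans h
  · refine sub_eq_zero.mp (eq_zero_of_forall_X_pow_dvd fun k => ?_)
    simpa using dvd_sub (X_pow_dvd_sub_iterate_of_fixed hT hv k) (hu k)

end Contraction

theorem existsUnique_eq_add_X_mul_pow (c : R⟦X⟧) (d : ℕ) : ∃! u : R⟦X⟧, u = c + X * u ^ d :=
  existsUnique_eq_of_X_pow_dvd_sub fun k f g h => by
    rw [add_sub_add_left_eq_sub, ← mul_sub, _root_.pow_succ']
    exact mul_dvd_mul_left X (h.trans (sub_dvd_pow_sub_pow f g d))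

/-- `[xⁿ] u^m` for `u = 1 + x u^(k+1)`: the classical `m / ((k+1)n + m) · C((k+1)n + m, n)`,
written for `n ≥ 1` as a difference of binomials so that it obeys Pascal's rule. -/
def powCoeff (k : ℕ) : ℕ → ℕ → ℚ
  | 0, _ => 1
  | n + 1, m => ((k + 1) * n + m + k).choose (n + 1) - k * ((k + 1) * n + m + k).choose n

theorem powCoeff_succ_zero (k n : ℕ) : powCoeff k (n + 1) 0 = 0 := by
  have h := Nat.choose_succ_right_eq ((k + 1) * n + k) n
  rw [show (k + 1) * n + k - n = k * (n + 1) from Nat.sub_eq_of_eq_add (by ring),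
    ← mul_assoc] at h
  have h' := Nat.eq_of_mul_eq_mul_right n.succ_pos h
  simp only [powCoeff, add_zero]
  rw [sub_eq_zero]
  exact_mod_cast h'.trans (mul_comm _ _)

theorem powCoeff_succ_succ (k n m : ℕ) :
    powCoeff k (n + 1) (m + 1) = powCoeff k (n + 1) m + powCoeff k n (m + k + 1) := by
  cases n with
  | zero =>
    simp only [powCoeff, mul_zero, zero_add, Nat.choose_one_right, Nat.choose_zero_right]
    push_cast
    ring
  | succ n =>
    simp only [powCoeff]
    rw [show (k + 1) * (n + 1) + (m + 1) + k = ((k + 1) * (n + 1) + m + k) + 1 by ring,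
      show (k + 1) * n + (m + k + 1) + k = (k + 1) * (n + 1) + m + k by ring,
      Nat.choose_succ_succ _ (n + 1), Nat.choose_succ_succ _ n]
    push_cast
    ring

theorem coeff_pow_eq_powCoeff {k : ℕ} {u : ℚ⟦X⟧} (hu : u = 1 + X * u ^ (k + 1)) (n m : ℕ) :
    coeff n (u ^ m) = powCoeff k n m := by
  have hu0 : constantCoeff u = 1 := by
    rw [hu]
    simp
  have hpow (m : ℕ) : u ^ (m + 1) = u ^ m + X * u ^ (m + k + 1) := by
    calc u ^ (m + 1) = u ^ m * (1 + X * u ^ (k + 1)) := by rw [← hu, _root_.pow_succ]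
      _ = u ^ m + X * u ^ (m + k + 1) := by ring
  induction n generalizing m with
  | zero => simp [hu0, powCoeff]
  | succ n ihn =>
    induction m with
    | zero => simp [powCoeff_succ_zero]
    | succ m ihm => rw [hpow, map_add, coeff_succ_X_mul, ihm, ihn, powCoeff_succ_succ]

end PowerSeries

theorem tpn_add_three (q n : ℕ) :
    tpn (q + 3) n = 2 * (2 * q + 3)! / ((q + 2)! * q !) *
      ((4 * n + 2 * q + 1)! / (n ! * (3 * n + 2 * q + 3)!)) := by
  rw [tpn, show 2 * (q + 3) - 3 = 2 * q + 3 by omega, show q + 3 - 1 = q + 2 by omega,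
    show q + 3 - 3 = q by omega, show 4 * n + 2 * (q + 3) - 5 = 4 * n + 2 * q + 1 by omega,
    show 3 * n + 2 * (q + 3) - 3 = 3 * n + 2 * q + 3 by omega]

theorem choose_mul_powCoeff_three (q n : ℕ) :
    ((2 * q + 2).choose q : ℚ) * PowerSeries.powCoeff 3 n (2 * q + 3) =
      ((2 * n + q + 1 : ℕ) : ℚ) * tpn (q + 3) n := by
  rw [tpn_add_three, Nat.cast_choose ℚ (by omega : q ≤ 2 * q + 2),
    show 2 * q + 2 - q = q + 2 by omega]
  cases n with
  | zero =>
    simp only [PowerSeries.powCoeff, mul_zero, zero_add, Nat.factorial_zero]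
    rw [Nat.factorial_succ (2 * q + 2), Nat.factorial_succ (2 * q + 1)]
    push_cast
    field_simp
    ring
  | succ n =>
    simp only [PowerSeries.powCoeff]
    rw [Nat.cast_choose ℚ (by omega : n + 1 ≤ (3 + 1) * n + (2 * q + 3) + 3),
      Nat.cast_choose ℚ (by omega : n ≤ (3 + 1) * n + (2 * q + 3) + 3),
      show (3 + 1) * n + (2 * q + 3) + 3 - (n + 1) = 3 * n + 2 * q + 5 by omega,
      show (3 + 1) * n + (2 * q + 3) + 3 - n = 3 * n + 2 * q + 6 by omega,
      show (3 + 1) * n + (2 * q + 3) + 3 = 4 * n + 2 * q + 5 + 1 by ring,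
      show 4 * (n + 1) + 2 * q + 1 = 4 * n + 2 * q + 5 by ring,
      show 3 * (n + 1) + 2 * q + 3 = 3 * n + 2 * q + 5 + 1 by ring,
      Nat.factorial_succ (4 * n + 2 * q + 5), Nat.factorial_succ (3 * n + 2 * q + 5),
      Nat.factorial_succ n, Nat.factorial_succ (2 * q + 2)]
    push_cast
    field_simp
    ring

/-- There is a unique formal power series `u` with `u = 1 + x·u⁴`;
and for `p ≥ 3` the coefficients of `T_p(x) = C(2p-4, p-3)·u^{2p-3}` are given by
`[xⁿ] T_p = (2n+p-2)·t_{p,n}`. -/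
theorem stmt10 (p n : ℕ) (hp : 3 ≤ p) :
    (∃! u : PowerSeries ℚ, u = 1 + PowerSeries.X * u ^ 4) ∧
      ∀ u : PowerSeries ℚ, u = 1 + PowerSeries.X * u ^ 4 →
        PowerSeries.coeff (R := ℚ) n
            (((Nat.choose (2 * p - 4) (p - 3) : ℚ)) • u ^ (2 * p - 3)) =
          ((2 * n + p - 2 : ℕ) : ℚ) * tpn p n := by
  refine ⟨existsUnique_eq_add_X_mul_pow 1 4, fun u hu => ?_⟩
  obtain ⟨q, rfl⟩ : ∃ q, p = q + 3 := ⟨p - 3, by omega⟩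
  rw [map_smul, smul_eq_mul, coeff_pow_eq_powCoeff (k := 3) hu,
    show 2 * (q + 3) - 3 = 2 * q + 3 by omega, show 2 * (q + 3) - 4 = 2 * q + 2 by omega,
    show q + 3 - 3 = q by omega, show 2 * n + (q + 3) - 2 = 2 * n + q + 1 by omega]
  exact choose_mul_powCoeff_three q n
end

section
/- For a graph M with a nonnegative integer edge-weight function β, the ℕ-biorientations of M in which every edge e has total weight β(e) are in bijection with the locally minimal ordinary orientations of the graph M' obtained from M by replacing each edge e by β(e) parallel copies; under this bijection the ingoing weight of each vertex in M equals its indegree in M'. -/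
/-!
Along a single edge of weight `n`, a locally minimal orientation of its `n` parallel copies
is a monotone map `Fin n → Bool`, and such a map is the threshold function `i ↦ (a ≤ i)` with
`a` its number of `false` values. Thus it is determined by how many copies point each way,
i.e. by a split `a + b = n`, which is exactly an ℕ-biorientation of the edge. The bijection
acts edge by edge, and the copies pointing each way contribute the half-edge weights `a`, `b`
to the indegrees.
-/

open Finset

namespace Fin

theorem card_filter_decide_le_eq_false {n a : ℕ} (h : a ≤ n) :
    #{i : Fin n | decide (a ≤ (i : ℕ)) = false} = a := by
  simpa [min_eq_right h] using card_filter_val_lt (n := n) (m := a)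

theorem card_filter_eq_false_add_card_filter_eq_true {n : ℕ} (o : Fin n → Bool) :
    #{i | o i = false} + #{i | o i = true} = n := by
  simpa using card_filter_add_card_filter_not (s := univ) (fun i => o i = false)

theorem card_filter_decide_le_eq_true {n a b : ℕ} (h : a + b = n) :
    #{i : Fin n | decide (a ≤ (i : ℕ)) = true} = b := by
  have := card_filter_eq_false_add_card_filter_eq_true fun i : Fin n => decide (a ≤ (i : ℕ))
  rw [card_filter_decide_le_eq_false (h ▸ Nat.le_add_right a b)] at this
  omega

theorem _root_.Monotone.fin_bool_eq_decide {n : ℕ} {o : Fin n → Bool} (ho : Monotone o)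
    (i : Fin n) : o i = decide (#{j | o j = false} ≤ (i : ℕ)) := by
  have hfalse_iff := lt_card_filter_univ_iff_apply_of_imp (j := i) (fun j => o j = false)
    fun k j hjk hk => Bool.eq_false_of_le_false (hk ▸ ho hjk)
  cases hoi : o i <;> simp_all

def splitEquivMonotone (n : ℕ) :
    {p : ℕ × ℕ // p.1 + p.2 = n} ≃ {o : Fin n → Bool // Monotone o} where
  toFun p := ⟨fun i => decide (p.1.1 ≤ (i : ℕ)), fun i j hij => by
    by_cases hi : p.1.1 ≤ (i : ℕ)
    · simp [hi, hi.trans (show (i : ℕ) ≤ j from hij)]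
    · simp [hi]⟩
  invFun o := ⟨(#{i | o.1 i = false}, #{i | o.1 i = true}),
    card_filter_eq_false_add_card_filter_eq_true o.1⟩
  left_inv p := Subtype.ext <| Prod.ext
    (card_filter_decide_le_eq_false ((Nat.le_add_right _ _).trans_eq p.2))
    (card_filter_decide_le_eq_true p.2)
  right_inv o := Subtype.ext <| funext fun i => (o.2.fin_bool_eq_decide i).symm

theorem card_filter_splitEquivMonotone_eq_false {n : ℕ} (p : {p : ℕ × ℕ // p.1 + p.2 = n}) :
    #{i | (splitEquivMonotone n p).1 i = false} = p.1.1 :=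
  congrArg (fun q => q.1.1) ((splitEquivMonotone n).symm_apply_apply p)

theorem card_filter_splitEquivMonotone_eq_true {n : ℕ} (p : {p : ℕ × ℕ // p.1 + p.2 = n}) :
    #{i | (splitEquivMonotone n p).1 i = true} = p.1.2 :=
  congrArg (fun q => q.1.2) ((splitEquivMonotone n).symm_apply_apply p)

end Fin

def biorientationEquivMonotone {E : Type} (β : E → ℕ) :
    {w : E → ℕ × ℕ // ∀ e, (w e).1 + (w e).2 = β e} ≃
      {o : (e : E) → Fin (β e) → Bool // ∀ e, Monotone (o e)} :=
  Equiv.subtypePiEquivPi.trans <|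
    (Equiv.piCongrRight fun e => Fin.splitEquivMonotone (β e)).trans Equiv.subtypePiEquivPi.symm

theorem biorientationEquivMonotone_apply {E : Type} {β : E → ℕ}
    (w : {w : E → ℕ × ℕ // ∀ e, (w e).1 + (w e).2 = β e}) (e : E) :
    (biorientationEquivMonotone β w).1 e = (Fin.splitEquivMonotone (β e) ⟨w.1 e, w.2 e⟩).1 :=
  rfl

theorem stmt15_general (V E : Type) [Fintype E] [DecidableEq V]
    (ends : E → V × V) (β : E → ℕ) :
    ∃ Φ : {w : E → ℕ × ℕ // ∀ e, (w e).1 + (w e).2 = β e} ≃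
        {o : (e : E) → Fin (β e) → Bool // ∀ e, Monotone (o e)},
      ∀ (w : {w : E → ℕ × ℕ // ∀ e, (w e).1 + (w e).2 = β e}) (v : V),
        (∑ e : E, ((if (ends e).1 = v then (w.1 e).1 else 0) +
            (if (ends e).2 = v then (w.1 e).2 else 0))) =
          ∑ e : E, ((if (ends e).1 = v then
              (univ.filter (fun i : Fin (β e) => (Φ w).1 e i = false)).card else 0) +
            (if (ends e).2 = v then
              (univ.filter (fun i : Fin (β e) => (Φ w).1 e i = true)).card else 0)) := by
  refine ⟨biorientationEquivMonotone β, fun w v => sum_congr rfl fun e _ => ?_⟩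
  rw [biorientationEquivMonotone_apply, Fin.card_filter_splitEquivMonotone_eq_false,
    Fin.card_filter_splitEquivMonotone_eq_true]

/-- For a graph with edge-endpoints `ends : E → V × V` and a
nonnegative integer edge-weight function `β`, the ℕ-biorientations in which every edge
`e` has total weight `β e` are in bijection with the locally minimal ordinary
orientations of the graph `M'` obtained by replacing each edge `e` by `β e` parallel
copies.  Here an orientation of `M'` assigns to each copy `i : Fin (β e)` a direction
(`true` = directed towards the second endpoint of `e`); the copies of an edge are
arranged in planar order, and local minimality (no counterclockwise circuit among the
copies of a single edge) amounts to monotonicity of the direction function on each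
bunch.  Under the bijection, the ingoing weight of each vertex of `M` equals its
indegree in `M'`. -/
theorem stmt15 (V E : Type) [Fintype V] [Fintype E] [DecidableEq V]
    (ends : E → V × V) (β : E → ℕ) :
    ∃ Φ : {w : E → ℕ × ℕ // ∀ e, (w e).1 + (w e).2 = β e} ≃
        {o : (e : E) → Fin (β e) → Bool // ∀ e, Monotone (o e)},
      ∀ (w : {w : E → ℕ × ℕ // ∀ e, (w e).1 + (w e).2 = β e}) (v : V),
        (∑ e : E, ((if (ends e).1 = v then (w.1 e).1 else 0) +
            (if (ends e).2 = v then (w.1 e).2 else 0))) =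
          ∑ e : E, ((if (ends e).1 = v then
              (univ.filter (fun i : Fin (β e) => (Φ w).1 e i = false)).card else 0) +
            (if (ends e).2 = v then
              (univ.filter (fun i : Fin (β e) => (Φ w).1 e i = true)).card else 0)) :=
  stmt15_general V E ends β
end

section
/- If d = 2b is even, then the formal power series W_i determined by the system W_{d-2} = x(1+W_0)^{d-1}, W_i = h_{i+2}(W_1,...,W_{d-2}) for 0 ≤ i ≤ d-3, satisfy W_i = 0 for all odd indices i; moreover the series V_i := W_{2i} satisfy V_{b-1} = x(1+V_0)^{2b-1} and V_i = h_{i+1}(V_1,...,V_{b-1}) for 0 ≤ i ≤ b-2. -/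
open Finset PowerSeries

/-- `hcomp j W` is the generating polynomial `h_j(W_1, W_2, …)` of integer compositions
of `j` with at least one part, where a part of size `i` is marked by `W i`:
`h_j = ∑_{r>0} ∑_{i_1+⋯+i_r=j, i_k>0} W_{i_1}⋯W_{i_r}`. -/
noncomputable def hcomp (j : ℕ) (W : ℕ → PowerSeries ℚ) : PowerSeries ℚ :=
  ∑ c ∈ univ.filter (fun c : Composition j => c.length ≠ 0), (c.blocks.map W).prod

/-- The system of equations `W_{d-2} = x(1+W_0)^{d-1}`,
`W_i = h_{i+2}(W_1,…,W_{d-2})` for `0 ≤ i ≤ d-3`, and `W_i = 0` for `i > d-2`. -/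
def IsSystemSol (d : ℕ) (W : ℕ → PowerSeries ℚ) : Prop :=
  W (d - 2) = PowerSeries.X * (1 + W 0) ^ (d - 1) ∧
  (∀ i : ℕ, i + 3 ≤ d → W i = hcomp (i + 2) W) ∧
  (∀ i : ℕ, d - 2 < i → W i = 0)

/-!
`X ^ n` divides every `W i` with `i` odd, by induction on `n`. For odd
`i` the composition sum `h_{i+2}(W)` runs over compositions of an odd number: the one-part
composition contributes `W (i+2)`, handled by a downward induction on `i` (the `W i` vanish for
large `i`), and every other composition has an odd part together with at least one further
part, whose factor is divisible by `X` since the constant terms vanish. Once the odd `W i` are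
zero, only compositions of `2m` into even parts survive in `h_{2m}(W)`, and halving the parts
identifies them with the compositions of `m`.
-/

theorem exists_odd_mem_of_odd_sum {l : List ℕ} (h : Odd l.sum) : ∃ a ∈ l, Odd a := by
  by_contra! hall
  exact Nat.not_even_iff_odd.2 h <| List.sum_induction Even (fun _ _ => Even.add) Even.zero
    fun a ha => Nat.not_odd_iff_even.1 (hall a ha)

theorem pow_succ_dvd_prod_map {ι M : Type*} [CommMonoid M] [DecidableEq ι] {x : M} {n : ℕ}
    {f : ι → M} {l : List ι} {a : ι} (ha : a ∈ l) (hl : 2 ≤ l.length) (hfa : x ^ n ∣ f a)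
    (hf : ∀ i ∈ l, x ∣ f i) : x ^ (n + 1) ∣ (l.map f).prod := by
  obtain ⟨b, hb⟩ : ∃ b, b ∈ l.erase a :=
    List.exists_mem_of_length_pos (by rw [List.length_erase_of_mem ha]; omega)
  rw [((List.perm_cons_erase ha).map f).prod_eq, List.map_cons, List.prod_cons, pow_succ]
  exact mul_dvd_mul hfa <|
    (hf b (List.mem_of_mem_erase hb)).trans (List.dvd_prod (List.mem_map_of_mem hb))

section OddVanishing

variable {W : ℕ → ℚ⟦X⟧}

theorem X_pow_succ_dvd_prod_of_odd (hW0 : ∀ i, constantCoeff (W i) = 0) {n j : ℕ}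
    (hdvd : ∀ i, Odd i → X ^ n ∣ W i) (hj : Odd j) (c : Composition j) (hc : 2 ≤ c.length) :
    X ^ (n + 1) ∣ (c.blocks.map W).prod := by
  obtain ⟨a, ha, hodd⟩ := exists_odd_mem_of_odd_sum (c.blocks_sum ▸ hj)
  exact pow_succ_dvd_prod_map ha hc (hdvd a hodd) fun i _ => X_dvd_iff.2 (hW0 i)

theorem X_pow_succ_dvd_of_odd (hW0 : ∀ i, constantCoeff (W i) = 0) {N n : ℕ}
    (hbig : ∀ i, N < i → W i = 0) (hrec : ∀ i, Odd i → i ≤ N → W i = hcomp (i + 2) W)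
    (hdvd : ∀ i, Odd i → X ^ n ∣ W i) (i : ℕ) (hi : Odd i) : X ^ (n + 1) ∣ W i := by
  suffices h : ∀ k i, N < i + k → Odd i → X ^ (n + 1) ∣ W i from h (N + 1) i (by omega) hi
  intro k
  induction k with
  | zero => exact fun i hi _ => by simp [hbig i hi]
  | succ k ih =>
    intro i hik hi
    rcases lt_or_ge N i with hNi | hiN
    · simp [hbig i hNi]
    rw [hrec i hi hiN, hcomp]
    refine Finset.dvd_sum fun c hc => ?_
    have hlen : c.length ≠ 0 := (Finset.mem_filter.1 hc).2
    rcases (by omega : c.length = 1 ∨ 2 ≤ c.length) with hone | htwo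
    · rw [(Composition.eq_single_iff_length (by omega)).2 hone, Composition.single_blocks]
      simpa using ih (i + 2) (by omega) (hi.add_even even_two)
    · exact X_pow_succ_dvd_prod_of_odd hW0 hdvd (hi.add_even even_two) c htwo

theorem eq_zero_of_odd_of_hcomp_recursion (hW0 : ∀ i, constantCoeff (W i) = 0) {N : ℕ}
    (hbig : ∀ i, N < i → W i = 0) (hrec : ∀ i, Odd i → i ≤ N → W i = hcomp (i + 2) W)
    (i : ℕ) (hi : Odd i) : W i = 0 := by
  have hdvd : ∀ n i, Odd i → X ^ n ∣ W i := by
    intro n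
    induction n with
    | zero => simp
    | succ n ih => exact X_pow_succ_dvd_of_odd hW0 hbig hrec ih
  ext m
  simpa using X_pow_dvd_iff.1 (hdvd (m + 1) i hi) m (by omega)

end OddVanishing

namespace Composition

def double {m : ℕ} (c : Composition m) : Composition (2 * m) where
  blocks := c.blocks.map (2 * ·)
  blocks_pos hi := by
    obtain ⟨a, ha, rfl⟩ := List.mem_map.1 hi
    have := c.blocks_pos ha
    omega
  blocks_sum := by rw [List.sum_map_mul_left, List.map_id', c.blocks_sum]

theorem double_injective {m : ℕ} : Function.Injective (double : Composition m → _) :=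
  fun _ _ h => Composition.ext <|
    List.map_injective_iff.2 (fun _ _ h => by omega) (congrArg Composition.blocks h)

theorem exists_double_eq_of_forall_even {m : ℕ} (c : Composition (2 * m))
    (h : ∀ x ∈ c.blocks, Even x) : ∃ c' : Composition m, c'.double = c := by
  have hhalve : (c.blocks.map (· / 2)).map (2 * ·) = c.blocks := by
    rw [List.map_map]
    conv_rhs => rw [← List.map_id c.blocks]
    refine List.map_congr_left fun x hx => ?_
    obtain ⟨k, rfl⟩ := h x hx
    simp only [Function.comp_apply, id_eq]
    omega
  refine ⟨⟨c.blocks.map (· / 2), fun {i} hi => ?_, ?_⟩, Composition.ext hhalve⟩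
  · obtain ⟨a, ha, rfl⟩ := List.mem_map.1 hi
    obtain ⟨k, rfl⟩ := h a ha
    have := c.blocks_pos ha
    omega
  · have := c.blocks_sum
    rw [← hhalve, List.sum_map_mul_left, List.map_id'] at this
    omega

end Composition

theorem hcomp_two_mul {W : ℕ → ℚ⟦X⟧} (hodd : ∀ i, Odd i → W i = 0) (m : ℕ) :
    hcomp (2 * m) W = hcomp m (fun k => W (2 * k)) := by
  classical
  have hlen (c : Composition m) : c.double.length = c.length := List.length_map _
  calc hcomp (2 * m) W
      = ∑ c ∈ (univ.filter fun c : Composition m => c.length ≠ 0).image Composition.double,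
          (c.blocks.map W).prod := by
        refine (Finset.sum_subset (fun c hc => ?_) fun c hc hnot => ?_).symm
        · obtain ⟨c', hc', rfl⟩ := Finset.mem_image.1 hc
          simpa only [Finset.mem_filter, Finset.mem_univ, true_and, hlen] using hc'
        · obtain ⟨x, hx, hxodd⟩ : ∃ x ∈ c.blocks, Odd x := by
            by_contra! hall
            obtain ⟨c', rfl⟩ :=
              c.exists_double_eq_of_forall_even fun x hx => Nat.not_odd_iff_even.1 (hall x hx)
            exact hnot (Finset.mem_image_of_mem _ (by simpa only [Finset.mem_filter, Finset.mem_univ, true_and, hlen] using hc))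
          exact List.prod_eq_zero (hodd x hxodd ▸ List.mem_map_of_mem hx)
    _ = hcomp m (fun k => W (2 * k)) := by
        rw [Finset.sum_image Composition.double_injective.injOn, hcomp]
        simp only [Composition.double, List.map_map]
        rfl

theorem stmt17_general (d b : ℕ) (hb : d = 2 * b)
    (W : ℕ → PowerSeries ℚ) (hW : IsSystemSol d W)
    (hW0 : ∀ i, PowerSeries.constantCoeff (W i) = 0) :
    (∀ i : ℕ, Odd i → W i = 0) ∧
      (W (2 * (b - 1)) = PowerSeries.X * (1 + W 0) ^ (2 * b - 1)) ∧
      (∀ i : ℕ, i + 2 ≤ b → W (2 * i) = hcomp (i + 1) (fun k => W (2 * k))) := by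
  obtain ⟨htop, hrec, hbig⟩ := hW
  have hodd : ∀ i, Odd i → W i = 0 :=
    eq_zero_of_odd_of_hcomp_recursion hW0 hbig fun i hi hiN =>
      hrec i (by obtain ⟨k, rfl⟩ := hi; omega)
  refine ⟨hodd, ?_, fun i hi => ?_⟩
  · rwa [show 2 * (b - 1) = d - 2 by omega, show 2 * b - 1 = d - 1 by omega]
  · rw [hrec (2 * i) (by omega), show 2 * i + 2 = 2 * (i + 1) by ring, hcomp_two_mul hodd]

/-- If `d = 2b` is even, then the power series `W_i` solving the
system (with zero constant terms) satisfy `W_i = 0` for all odd `i`; moreover the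
series `V_i := W_{2i}` satisfy `V_{b-1} = x(1+V_0)^{2b-1}` and
`V_i = h_{i+1}(V_1,…,V_{b-1})` for `0 ≤ i ≤ b-2`. -/
theorem stmt17 (d b : ℕ) (hd : 3 ≤ d) (hb : d = 2 * b)
    (W : ℕ → PowerSeries ℚ) (hW : IsSystemSol d W)
    (hW0 : ∀ i, PowerSeries.constantCoeff (W i) = 0) :
    (∀ i : ℕ, Odd i → W i = 0) ∧
      (W (2 * (b - 1)) = PowerSeries.X * (1 + W 0) ^ (2 * b - 1)) ∧
      (∀ i : ℕ, i + 2 ≤ b → W (2 * i) = hcomp (i + 1) (fun k => W (2 * k))) :=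
  stmt17_general d b hb W hW hW0
end
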